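/- arXiv:1501.07181 — 2 statements merged into one kernel-verified Lean document; each statement's English description precedes it below -/
import Mathlib

section
/- Let h ≥ 1, let Ω ⊂ ℝⁿ be a bounded open set and T > 0. A continuous function u on Ω̄ × [0,T) is a past parabolic viscosity h-infinite solution of u_t − Δ^h_∞u = 0 in Ω_T if and only if it is a parabolic viscosity h-infinite solution of u_t − Δ^h_∞u = 0 in Ω_T. -/
open scoped RealInnerProductSpace
open Filter Topology Asymptotics

noncomputable section

/-- Euclidean n-space, viewed as the abelian Carnot group. -/
abbrev Euc (n : ℕ) := EuclideanSpace ℝ (Fin n)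

variable {n : ℕ}

/-- Time derivative ∂ₜφ of a function of space and time. -/
def tderiv (φ : Euc n → ℝ → ℝ) (x : Euc n) (t : ℝ) : ℝ := deriv (φ x) t

/-- Spatial gradient ∇φ of a function of space and time. -/
def sgrad (φ : Euc n → ℝ → ℝ) (x : Euc n) (t : ℝ) : Euc n :=
  gradient (fun y => φ y t) x

/-- Spatial Hessian D²φ of a function of space and time, as a continuous linear map. -/
def sHess (φ : Euc n → ℝ → ℝ) (x : Euc n) (t : ℝ) : Euc n →L[ℝ] Euc n :=
  fderiv ℝ (fun y => sgrad φ y t) x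

/-- φ is C¹ in time and C² in space near (x₀,t₀): the time derivative and the spatial
derivatives up to order two exist near (x₀,t₀) and are (jointly) continuous there. -/
def ParabolicC2 (φ : Euc n → ℝ → ℝ) (x₀ : Euc n) (t₀ : ℝ) : Prop :=
  ∃ U ∈ 𝓝 ((x₀, t₀) : Euc n × ℝ),
    (∀ p ∈ U, DifferentiableAt ℝ (φ p.1) p.2) ∧
    (∀ p ∈ U, ContDiffAt ℝ 2 (fun y => φ y p.2) p.1) ∧
    ContinuousOn (fun p : Euc n × ℝ => φ p.1 p.2) U ∧
    ContinuousOn (fun p : Euc n × ℝ => tderiv φ p.1 p.2) U ∧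
    ContinuousOn (fun p : Euc n × ℝ => sgrad φ p.1 p.2) U ∧
    ContinuousOn (fun p : Euc n × ℝ => sHess φ p.1 p.2) U

/-- The h-homogeneous infinite Laplacian Δ^h_∞φ = ‖∇φ‖^(h-3) ⟨D²φ ∇φ, ∇φ⟩ (spatial). -/
def hLap (h : ℝ) (φ : Euc n → ℝ → ℝ) (x : Euc n) (t : ℝ) : ℝ :=
  ‖sgrad φ x t‖ ^ (h - 3) * ⟪(sHess φ x t) (sgrad φ x t), sgrad φ x t⟫

/-- max_{‖η‖=1} ⟨A η, η⟩. -/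
def qMax (A : Euc n →L[ℝ] Euc n) : ℝ :=
  sSup {r : ℝ | ∃ η : Euc n, ‖η‖ = 1 ∧ r = ⟪A η, η⟫}

/-- min_{‖η‖=1} ⟨A η, η⟩. -/
def qMin (A : Euc n →L[ℝ] Euc n) : ℝ :=
  sInf {r : ℝ | ∃ η : Euc n, ‖η‖ = 1 ∧ r = ⟪A η, η⟫}

/-- φ is a test function touching u from above at (x₀,t₀), relative to the domain Q:
φ is C¹ in t, C² in x near (x₀,t₀) and u - φ has a local maximum equal to 0 at (x₀,t₀). -/
def TAbove (Q : Set (Euc n × ℝ)) (u φ : Euc n → ℝ → ℝ) (x₀ : Euc n) (t₀ : ℝ) : Prop :=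
  ParabolicC2 φ x₀ t₀ ∧ u x₀ t₀ = φ x₀ t₀ ∧
    ∀ᶠ p in 𝓝 ((x₀, t₀) : Euc n × ℝ), p ∈ Q → u p.1 p.2 ≤ φ p.1 p.2

/-- φ is a test function touching u from below at (x₀,t₀), relative to the domain Q. -/
def TBelow (Q : Set (Euc n × ℝ)) (u φ : Euc n → ℝ → ℝ) (x₀ : Euc n) (t₀ : ℝ) : Prop :=
  ParabolicC2 φ x₀ t₀ ∧ u x₀ t₀ = φ x₀ t₀ ∧
    ∀ᶠ p in 𝓝 ((x₀, t₀) : Euc n × ℝ), p ∈ Q → φ p.1 p.2 ≤ u p.1 p.2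

/-- Past test function touching u from above: u - φ ≤ 0 on a neighborhood of (x₀,t₀)
but only required for times t < t₀. -/
def TAbovePast (Q : Set (Euc n × ℝ)) (u φ : Euc n → ℝ → ℝ) (x₀ : Euc n) (t₀ : ℝ) : Prop :=
  ParabolicC2 φ x₀ t₀ ∧ u x₀ t₀ = φ x₀ t₀ ∧
    ∀ᶠ p in 𝓝 ((x₀, t₀) : Euc n × ℝ), p ∈ Q → p.2 < t₀ → u p.1 p.2 ≤ φ p.1 p.2

/-- Past test function touching u from below. -/
def TBelowPast (Q : Set (Euc n × ℝ)) (u φ : Euc n → ℝ → ℝ) (x₀ : Euc n) (t₀ : ℝ) : Prop :=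
  ParabolicC2 φ x₀ t₀ ∧ u x₀ t₀ = φ x₀ t₀ ∧
    ∀ᶠ p in 𝓝 ((x₀, t₀) : Euc n × ℝ), p ∈ Q → p.2 < t₀ → φ p.1 p.2 ≤ u p.1 p.2

/-- The subsolution inequalities that a test function must satisfy at a touching point,
for the equation u_t − Δ^h_∞ u = 0. -/
def SubCond (h : ℝ) (φ : Euc n → ℝ → ℝ) (x₀ : Euc n) (t₀ : ℝ) : Prop :=
  (sgrad φ x₀ t₀ ≠ 0 → tderiv φ x₀ t₀ - hLap h φ x₀ t₀ ≤ 0) ∧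
  (sgrad φ x₀ t₀ = 0 → h = 1 → tderiv φ x₀ t₀ - qMax (sHess φ x₀ t₀) ≤ 0) ∧
  (sgrad φ x₀ t₀ = 0 → 1 < h → tderiv φ x₀ t₀ ≤ 0)

/-- The supersolution inequalities at a touching point. -/
def SuperCond (h : ℝ) (φ : Euc n → ℝ → ℝ) (x₀ : Euc n) (t₀ : ℝ) : Prop :=
  (sgrad φ x₀ t₀ ≠ 0 → 0 ≤ tderiv φ x₀ t₀ - hLap h φ x₀ t₀) ∧
  (sgrad φ x₀ t₀ = 0 → h = 1 → 0 ≤ tderiv φ x₀ t₀ - qMin (sHess φ x₀ t₀)) ∧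
  (sgrad φ x₀ t₀ = 0 → 1 < h → 0 ≤ tderiv φ x₀ t₀)

/-- Parabolic viscosity h-infinite subsolution of u_t − Δ^h_∞u = 0 on Q. -/
def IsParaSub (h : ℝ) (Q : Set (Euc n × ℝ)) (u : Euc n → ℝ → ℝ) : Prop :=
  UpperSemicontinuousOn (fun p : Euc n × ℝ => u p.1 p.2) Q ∧
  ∀ x₀ t₀, (x₀, t₀) ∈ Q → ∀ φ, TAbove Q u φ x₀ t₀ → SubCond h φ x₀ t₀

/-- Parabolic viscosity h-infinite supersolution of u_t − Δ^h_∞u = 0 on Q. -/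
def IsParaSuper (h : ℝ) (Q : Set (Euc n × ℝ)) (u : Euc n → ℝ → ℝ) : Prop :=
  LowerSemicontinuousOn (fun p : Euc n × ℝ => u p.1 p.2) Q ∧
  ∀ x₀ t₀, (x₀, t₀) ∈ Q → ∀ φ, TBelow Q u φ x₀ t₀ → SuperCond h φ x₀ t₀

/-- Past parabolic viscosity h-infinite subsolution. -/
def IsPastParaSub (h : ℝ) (Q : Set (Euc n × ℝ)) (u : Euc n → ℝ → ℝ) : Prop :=
  UpperSemicontinuousOn (fun p : Euc n × ℝ => u p.1 p.2) Q ∧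
  ∀ x₀ t₀, (x₀, t₀) ∈ Q → ∀ φ, TAbovePast Q u φ x₀ t₀ → SubCond h φ x₀ t₀

/-- Past parabolic viscosity h-infinite supersolution. -/
def IsPastParaSuper (h : ℝ) (Q : Set (Euc n × ℝ)) (u : Euc n → ℝ → ℝ) : Prop :=
  LowerSemicontinuousOn (fun p : Euc n × ℝ => u p.1 p.2) Q ∧
  ∀ x₀ t₀, (x₀, t₀) ∈ Q → ∀ φ, TBelowPast Q u φ x₀ t₀ → SuperCond h φ x₀ t₀

/-- Parabolic viscosity subsolution of u_t + F(t,x,u,∇u,D²u) = 0 on Q, for a general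
operator F. -/
def IsParaSubF (F : ℝ → Euc n → ℝ → Euc n → (Euc n →L[ℝ] Euc n) → ℝ)
    (Q : Set (Euc n × ℝ)) (u : Euc n → ℝ → ℝ) : Prop :=
  UpperSemicontinuousOn (fun p : Euc n × ℝ => u p.1 p.2) Q ∧
  ∀ x₀ t₀, (x₀, t₀) ∈ Q → ∀ φ, TAbove Q u φ x₀ t₀ →
    tderiv φ x₀ t₀ + F t₀ x₀ (u x₀ t₀) (sgrad φ x₀ t₀) (sHess φ x₀ t₀) ≤ 0

/-- Parabolic viscosity supersolution of u_t + F(t,x,u,∇u,D²u) = 0 on Q. -/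
def IsParaSuperF (F : ℝ → Euc n → ℝ → Euc n → (Euc n →L[ℝ] Euc n) → ℝ)
    (Q : Set (Euc n × ℝ)) (u : Euc n → ℝ → ℝ) : Prop :=
  LowerSemicontinuousOn (fun p : Euc n × ℝ => u p.1 p.2) Q ∧
  ∀ x₀ t₀, (x₀, t₀) ∈ Q → ∀ φ, TBelow Q u φ x₀ t₀ →
    0 ≤ tderiv φ x₀ t₀ + F t₀ x₀ (u x₀ t₀) (sgrad φ x₀ t₀) (sHess φ x₀ t₀)

/-- F is proper: F(t,x,r,η,X) ≤ F(t,x,s,η,Y) whenever r ≤ s and Y ≤ X (Loewner order). -/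
def IsProperF (F : ℝ → Euc n → ℝ → Euc n → (Euc n →L[ℝ] Euc n) → ℝ) : Prop :=
  ∀ (t : ℝ) (x : Euc n) (r s : ℝ) (η : Euc n) (X Y : Euc n →L[ℝ] Euc n),
    r ≤ s → (∀ v : Euc n, ⟪Y v, v⟫ ≤ ⟪X v, v⟫) → F t x r η X ≤ F t x s η Y

/-- The lower semicontinuous envelope of u relative to Q:
u_*(x,t) = lim_{r↓0} inf { u(y,s) : (y,s) ∈ Q, |y−x| + |s−t| ≤ r }. -/
def lscEnvOn (Q : Set (Euc n × ℝ)) (u : Euc n → ℝ → ℝ) (x : Euc n) (t : ℝ) : ℝ :=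
  ⨆ r : {r : ℝ // 0 < r},
    sInf ((fun p : Euc n × ℝ => u p.1 p.2) '' {p ∈ Q | ‖p.1 - x‖ + |p.2 - t| ≤ r.1})

/-- The upper semicontinuous envelope of u relative to Q. -/
def uscEnvOn (Q : Set (Euc n × ℝ)) (u : Euc n → ℝ → ℝ) (x : Euc n) (t : ℝ) : ℝ :=
  ⨅ r : {r : ℝ // 0 < r},
    sSup ((fun p : Euc n × ℝ => u p.1 p.2) '' {p ∈ Q | ‖p.1 - x‖ + |p.2 - t| ≤ r.1})

/-- Hessian of a function of space only. -/
def eHess (φ : Euc n → ℝ) (x : Euc n) : Euc n →L[ℝ] Euc n :=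
  fderiv ℝ (gradient φ) x

/-- The stationary h-homogeneous infinite Laplacian. -/
def eLap (h : ℝ) (φ : Euc n → ℝ) (x : Euc n) : ℝ :=
  ‖gradient φ x‖ ^ (h - 3) * ⟪(eHess φ x) (gradient φ x), gradient φ x⟫

/-- C² test function touching u from above at x₀, relative to Ω. -/
def ETAbove (Ω : Set (Euc n)) (u φ : Euc n → ℝ) (x₀ : Euc n) : Prop :=
  ContDiffAt ℝ 2 φ x₀ ∧ u x₀ = φ x₀ ∧ ∀ᶠ x in 𝓝 x₀, x ∈ Ω → u x ≤ φ x

/-- C² test function touching u from below at x₀, relative to Ω. -/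
def ETBelow (Ω : Set (Euc n)) (u φ : Euc n → ℝ) (x₀ : Euc n) : Prop :=
  ContDiffAt ℝ 2 φ x₀ ∧ u x₀ = φ x₀ ∧ ∀ᶠ x in 𝓝 x₀, x ∈ Ω → φ x ≤ u x

/-- Viscosity subsolution of −Δ^h_∞u = 0 in Ω. -/
def IsEllSub (h : ℝ) (Ω : Set (Euc n)) (u : Euc n → ℝ) : Prop :=
  UpperSemicontinuousOn u Ω ∧
  ∀ x₀ ∈ Ω, ∀ φ, ETAbove Ω u φ x₀ → gradient φ x₀ ≠ 0 → 0 ≤ eLap h φ x₀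

/-- Viscosity supersolution of −Δ^h_∞u = 0 in Ω. -/
def IsEllSuper (h : ℝ) (Ω : Set (Euc n)) (u : Euc n → ℝ) : Prop :=
  LowerSemicontinuousOn u Ω ∧
  ∀ x₀ ∈ Ω, ∀ φ, ETBelow Ω u φ x₀ → gradient φ x₀ ≠ 0 → eLap h φ x₀ ≤ 0

/-!
Every test function is a past test function, so one direction is immediate. Conversely, let `φ`
touch a subsolution `u` from above only in the past at `(x₀, t₀)`. By continuity `u ≤ φ` also at
time `t₀`, so the maxima `z_j` of `u - φ - ‖x - x₀‖⁴ - (j + 1) (t - t₀)²` on a small closed ball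
never lie in the past, and they converge to `(x₀, t₀)`. The penalized function touches `u` from
above at `z_j` in the ordinary sense; its time derivative exceeds `∂ₜφ` by
`2 (j + 1) (t_j - t₀) ≥ 0`, while its spatial gradient and Hessian converge to those of `φ` at
`(x₀, t₀)`, since the gradient and Hessian of the quartic vanish at `x₀`. The subsolution
inequalities are stable under such limits. Supersolutions are handled by passing to `-u`.
-/

section OrdinaryOfPast

variable {h : ℝ} {Q : Set (Euc n × ℝ)} {u : Euc n → ℝ → ℝ}

lemma IsPastParaSub.isParaSub (hu : IsPastParaSub h Q u) : IsParaSub h Q u :=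
  ⟨hu.1, fun x₀ t₀ hz φ ⟨hC2, heq, hle⟩ =>
    hu.2 x₀ t₀ hz φ ⟨hC2, heq, hle.mono fun _ hp hpQ _ => hp hpQ⟩⟩

lemma IsPastParaSuper.isParaSuper (hu : IsPastParaSuper h Q u) : IsParaSuper h Q u :=
  ⟨hu.1, fun x₀ t₀ hz φ ⟨hC2, heq, hle⟩ =>
    hu.2 x₀ t₀ hz φ ⟨hC2, heq, hle.mono fun _ hp hpQ _ => hp hpQ⟩⟩

end OrdinaryOfPast

section Negation

variable {h : ℝ} {Q : Set (Euc n × ℝ)} {u φ : Euc n → ℝ → ℝ}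

lemma tderiv_neg (φ : Euc n → ℝ → ℝ) (x : Euc n) (t : ℝ) :
    tderiv (fun x t => -φ x t) x t = -tderiv φ x t :=
  deriv.neg

lemma sgrad_neg (φ : Euc n → ℝ → ℝ) (x : Euc n) (t : ℝ) :
    sgrad (fun x t => -φ x t) x t = -sgrad φ x t := by
  simp only [sgrad, gradient, fderiv_fun_neg, map_neg]

lemma sHess_neg (φ : Euc n → ℝ → ℝ) (x : Euc n) (t : ℝ) :
    sHess (fun x t => -φ x t) x t = -sHess φ x t := by
  simp only [sHess, sgrad_neg, fderiv_fun_neg]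

lemma hLap_neg (h : ℝ) (φ : Euc n → ℝ → ℝ) (x : Euc n) (t : ℝ) :
    hLap h (fun x t => -φ x t) x t = -hLap h φ x t := by
  simp only [hLap, sgrad_neg, sHess_neg, norm_neg, neg_apply, map_neg,
    neg_neg, inner_neg_right, mul_neg]

lemma qMin_eq_neg_qMax (A : Euc n →L[ℝ] Euc n) : qMin A = -qMax (-A) := by
  rw [qMin, qMax, Real.sInf_def]
  congr 2
  ext r
  simp only [Set.mem_neg, Set.mem_ofPred_eq, neg_apply, inner_neg_left,
    neg_eq_iff_eq_neg]

lemma subCond_neg_iff (h : ℝ) (φ : Euc n → ℝ → ℝ) (x₀ : Euc n) (t₀ : ℝ) :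
    SubCond h (fun x t => -φ x t) x₀ t₀ ↔ SuperCond h φ x₀ t₀ := by
  simp only [SubCond, SuperCond, sgrad_neg, tderiv_neg, hLap_neg, sHess_neg, neg_eq_zero,
    ne_eq, qMin_eq_neg_qMax]
  constructor <;> rintro ⟨hne, h1, hgt⟩ <;>
    exact ⟨fun hg => by linarith [hne hg], fun hg hh => by linarith [h1 hg hh],
      fun hg hh => by linarith [hgt hg hh]⟩

lemma ParabolicC2.neg {x₀ : Euc n} {t₀ : ℝ} (hφ : ParabolicC2 φ x₀ t₀) :
    ParabolicC2 (fun x t => -φ x t) x₀ t₀ := by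
  obtain ⟨U, hU, hdt, hdx, hc, hct, hcx, hcxx⟩ := hφ
  refine ⟨U, hU, fun p hp => (hdt p hp).neg, fun p hp => (hdx p hp).neg, hc.neg, ?_, ?_, ?_⟩
  · simpa only [tderiv_neg] using hct.fun_neg
  · simpa only [sgrad_neg] using hcx.fun_neg
  · simpa only [sHess_neg] using hcxx.fun_neg

lemma IsParaSuper.neg (hu : IsParaSuper h Q u) : IsParaSub h Q (fun x t => -u x t) := by
  refine ⟨hu.1.neg, fun x₀ t₀ hz φ ⟨hC2, heq, hle⟩ => ?_⟩
  have hbelow : TBelow Q u (fun x t => -φ x t) x₀ t₀ :=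
    ⟨hC2.neg, by simp only [← heq, neg_neg],
      hle.mono fun p hp hpQ => neg_le.mp (hp hpQ)⟩
  simpa only [← subCond_neg_iff, neg_neg] using hu.2 x₀ t₀ hz _ hbelow

lemma IsPastParaSuper.of_neg (hlsc : LowerSemicontinuousOn (fun p : Euc n × ℝ => u p.1 p.2) Q)
    (hu : IsPastParaSub h Q (fun x t => -u x t)) : IsPastParaSuper h Q u := by
  refine ⟨hlsc, fun x₀ t₀ hz φ ⟨hC2, heq, hle⟩ => ?_⟩
  have habove : TAbovePast Q (fun x t => -u x t) (fun x t => -φ x t) x₀ t₀ :=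
    ⟨hC2.neg, by simp only [heq],
      hle.mono fun p hp hpQ hpt => neg_le_neg (hp hpQ hpt)⟩
  exact (subCond_neg_iff h φ x₀ t₀).mp (hu.2 x₀ t₀ hz _ habove)

end Negation

section Jet

lemma inner_apply_self_le_opNorm {E : Type*} [NormedAddCommGroup E] [InnerProductSpace ℝ E]
    (A : E →L[ℝ] E) (v : E) :
    ⟪A v, v⟫ ≤ ‖A‖ * ‖v‖ ^ 2 :=
  calc ⟪A v, v⟫ ≤ ‖A v‖ * ‖v‖ := real_inner_le_norm _ _
    _ ≤ ‖A‖ * ‖v‖ * ‖v‖ := by gcongr; exact A.le_opNorm v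
    _ = ‖A‖ * ‖v‖ ^ 2 := by ring

lemma bddAbove_inner_apply_unit (A : Euc n →L[ℝ] Euc n) :
    BddAbove {r : ℝ | ∃ η : Euc n, ‖η‖ = 1 ∧ r = ⟪A η, η⟫} :=
  ⟨‖A‖, by
    rintro _ ⟨η, hη, rfl⟩
    simpa [hη] using inner_apply_self_le_opNorm A η⟩

lemma inner_le_qMax (A : Euc n →L[ℝ] Euc n) {η : Euc n} (hη : ‖η‖ = 1) : ⟪A η, η⟫ ≤ qMax A :=
  le_csSup (bddAbove_inner_apply_unit A) ⟨η, hη, rfl⟩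

lemma qMax_le_qMax_add_norm_sub (A B : Euc n →L[ℝ] Euc n) : qMax B ≤ qMax A + ‖B - A‖ := by
  by_cases hS : ∃ η : Euc n, ‖η‖ = 1
  · obtain ⟨η₀, hη₀⟩ := hS
    refine csSup_le ⟨_, η₀, hη₀, rfl⟩ ?_
    rintro _ ⟨η, hη, rfl⟩
    have hBA : ⟪(B - A) η, η⟫ ≤ ‖B - A‖ := by
      simpa [hη] using inner_apply_self_le_opNorm (B - A) η
    have hsplit : ⟪B η, η⟫ = ⟪A η, η⟫ + ⟪(B - A) η, η⟫ := by
      rw [sub_apply, inner_sub_left]; ring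
    linarith [inner_le_qMax A hη]
  · push Not at hS
    simp [qMax, hS]

def SubJetCond (h a : ℝ) (g : Euc n) (A : Euc n →L[ℝ] Euc n) : Prop :=
  (g ≠ 0 → a - ‖g‖ ^ (h - 3) * ⟪A g, g⟫ ≤ 0) ∧
  (g = 0 → h = 1 → a - qMax A ≤ 0) ∧
  (g = 0 → 1 < h → a ≤ 0)

variable {h a b : ℝ} {g : Euc n} {A : Euc n →L[ℝ] Euc n}

lemma subCond_iff_subJetCond (φ : Euc n → ℝ → ℝ) (x : Euc n) (t : ℝ) :
    SubCond h φ x t ↔ SubJetCond h (tderiv φ x t) (sgrad φ x t) (sHess φ x t) :=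
  Iff.rfl

lemma SubJetCond.mono (H : SubJetCond h b g A) (hab : a ≤ b) : SubJetCond h a g A :=
  ⟨fun hg => by linarith [H.1 hg], fun hg hh => by linarith [H.2.1 hg hh],
    fun hg hh => by linarith [H.2.2 hg hh]⟩

lemma SubJetCond.le_qMax (H : SubJetCond 1 a g A) : a ≤ qMax A := by
  rcases eq_or_ne g 0 with hg | hg
  · linarith [H.2.1 hg rfl]
  have hpos : 0 < ‖g‖ := norm_pos_iff.mpr hg
  have hrescale : ‖g‖ ^ ((1 : ℝ) - 3) * ⟪A g, g⟫ = ⟪A (‖g‖⁻¹ • g), ‖g‖⁻¹ • g⟫ := by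
    rw [show (1 : ℝ) - 3 = -2 by norm_num, Real.rpow_neg hpos.le, Real.rpow_two, map_smul,
      real_inner_smul_left, real_inner_smul_right]
    ring
  have hunit : ‖‖g‖⁻¹ • g‖ = 1 := by
    rw [norm_smul, norm_inv, norm_norm, inv_mul_cancel₀ hpos.ne']
  have h1 := H.1 hg
  rw [hrescale] at h1
  linarith [inner_le_qMax A hunit]

lemma SubJetCond.le_rpow_mul_opNorm (hh : 1 < h) (H : SubJetCond h a g A) :
    a ≤ ‖g‖ ^ (h - 1) * ‖A‖ := by
  rcases eq_or_ne g 0 with hg | hg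
  · rw [hg, norm_zero, Real.zero_rpow (by linarith), zero_mul]
    exact H.2.2 hg hh
  have hpos : 0 < ‖g‖ := norm_pos_iff.mpr hg
  calc a ≤ ‖g‖ ^ (h - 3) * ⟪A g, g⟫ := by linarith [H.1 hg]
    _ ≤ ‖g‖ ^ (h - 3) * (‖A‖ * ‖g‖ ^ (2 : ℝ)) := by
      rw [Real.rpow_two]
      gcongr
      exact inner_apply_self_le_opNorm A g
    _ = ‖g‖ ^ (h - 1) * ‖A‖ := by
      rw [mul_left_comm, ← Real.rpow_add hpos, mul_comm]
      ring_nf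

end Jet

section JetLimit

variable {ι : Type*} {l : Filter ι} [l.NeBot] {h a₀ : ℝ} {g₀ : Euc n} {A₀ : Euc n →L[ℝ] Euc n}
  {a : ι → ℝ} {g : ι → Euc n} {A : ι → Euc n →L[ℝ] Euc n}

lemma SubJetCond.of_tendsto (ha : Tendsto a l (𝓝 a₀)) (hg : Tendsto g l (𝓝 g₀))
    (hA : Tendsto A l (𝓝 A₀)) (H : ∀ᶠ i in l, SubJetCond h (a i) (g i) (A i)) :
    SubJetCond h a₀ g₀ A₀ := by
  refine ⟨fun hg₀ => ?_, fun _ hh => ?_, fun hg₀ hh => ?_⟩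
  · have hlim : Tendsto (fun i => ‖g i‖ ^ (h - 3) * ⟪A i (g i), g i⟫) l
        (𝓝 (‖g₀‖ ^ (h - 3) * ⟪A₀ g₀, g₀⟫)) :=
      ((hg.norm.rpow_const (Or.inl (norm_ne_zero_iff.mpr hg₀))).mul
        (((isBoundedBilinearMap_apply.continuous.tendsto _).comp (hA.prodMk_nhds hg)).inner hg))
    have hle := le_of_tendsto_of_tendsto ha hlim <|
      (H.and (hg.eventually_ne hg₀)).mono fun i ⟨Hi, hgi⟩ => by linarith [Hi.1 hgi]
    linarith
  · subst hh
    have hlim : Tendsto (fun i => qMax A₀ + ‖A i - A₀‖) l (𝓝 (qMax A₀)) := by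
      simpa using tendsto_const_nhds.add (tendsto_iff_norm_sub_tendsto_zero.mp hA)
    have hle := le_of_tendsto_of_tendsto ha hlim <|
      H.mono fun i Hi => Hi.le_qMax.trans (qMax_le_qMax_add_norm_sub A₀ (A i))
    linarith
  · have hlim : Tendsto (fun i => ‖g i‖ ^ (h - 1) * ‖A i‖) l (𝓝 0) := by
      have := (hg.norm.rpow_const (p := h - 1) (Or.inr (by linarith))).mul hA.norm
      rwa [hg₀, norm_zero, Real.zero_rpow (by linarith), zero_mul] at this
    exact le_of_tendsto_of_tendsto ha hlim (H.mono fun i Hi => Hi.le_rpow_mul_opNorm hh)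

end JetLimit

section QuarticPenalty

variable {E : Type*} [NormedAddCommGroup E] [InnerProductSpace ℝ E] (x₀ : E)

lemma contDiff_norm_sub_pow_four : ContDiff ℝ 2 (fun y : E => ‖y - x₀‖ ^ 4) := by
  have hsq : ContDiff ℝ 2 (fun y : E => ‖y - x₀‖ ^ 2) :=
    (contDiff_norm_sq ℝ).comp (contDiff_id.sub contDiff_const)
  simpa only [← pow_mul] using hsq.pow 2

variable [CompleteSpace E]

lemma hasGradientAt_norm_sub_pow_four (y : E) :
    HasGradientAt (fun y => ‖y - x₀‖ ^ 4) ((4 * ‖y - x₀‖ ^ 2) • (y - x₀)) y := by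
  have hsq : HasFDerivAt (fun y => (‖y - x₀‖ ^ 2) ^ 2) _ y :=
    (((hasFDerivAt_id y).sub_const x₀).norm_sq).pow 2
  rw [hasGradientAt_iff_hasFDerivAt]
  refine (hsq.congr_fderiv ?_).congr_of_eventuallyEq (.of_forall fun z => by ring)
  ext v
  simp only [id_eq, Nat.add_one_sub_one, pow_one, nsmul_eq_mul, Nat.cast_ofNat, map_sub,
    ContinuousLinearMap.comp_id, smul_apply, sub_apply, coe_innerSL_apply, smul_eq_mul, map_smul,
    InnerProductSpace.toDual_apply_apply]
  ring

lemma gradient_norm_sub_pow_four :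
    gradient (fun y : E => ‖y - x₀‖ ^ 4) = fun y => (4 * ‖y - x₀‖ ^ 2) • (y - x₀) :=
  gradient_eq (hasGradientAt_norm_sub_pow_four x₀)

lemma contDiff_gradient_norm_sub_pow_four :
    ContDiff ℝ 1 (gradient fun y : E => ‖y - x₀‖ ^ 4) := by
  rw [gradient_norm_sub_pow_four]
  have hsub : ContDiff ℝ 1 (fun y : E => y - x₀) := contDiff_id.sub contDiff_const
  exact (contDiff_const.mul ((contDiff_norm_sq ℝ).comp hsub)).smul hsub

lemma fderiv_gradient_norm_sub_pow_four_self :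
    fderiv ℝ (gradient fun y : E => ‖y - x₀‖ ^ 4) x₀ = 0 := by
  rw [gradient_norm_sub_pow_four]
  have hsub := (hasFDerivAt_id (𝕜 := ℝ) x₀).sub_const x₀
  simpa using ((hsub.norm_sq.const_mul 4).fun_smul hsub).fderiv

end QuarticPenalty

section ParabolicC2

variable {φ : Euc n → ℝ → ℝ} {x : Euc n} {t : ℝ}

lemma ParabolicC2.eventually (hφ : ParabolicC2 φ x t) :
    ∀ᶠ p in 𝓝 ((x, t) : Euc n × ℝ), ParabolicC2 φ p.1 p.2 := by
  obtain ⟨U, hU, hrest⟩ := hφ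
  exact (eventually_eventually_nhds.mpr hU).mono fun p hp => ⟨U, hp, hrest⟩

lemma ParabolicC2.differentiableAt_time (hφ : ParabolicC2 φ x t) :
    DifferentiableAt ℝ (φ x) t :=
  let ⟨_, hU, hdt, _⟩ := hφ; hdt (x, t) (mem_of_mem_nhds hU)

lemma ParabolicC2.contDiffAt_space (hφ : ParabolicC2 φ x t) :
    ContDiffAt ℝ 2 (fun y => φ y t) x :=
  let ⟨_, hU, _, hdx, _⟩ := hφ; hdx (x, t) (mem_of_mem_nhds hU)

lemma ParabolicC2.continuousAt (hφ : ParabolicC2 φ x t) :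
    ContinuousAt (fun p : Euc n × ℝ => φ p.1 p.2) (x, t) :=
  let ⟨_, hU, _, _, hc, _⟩ := hφ; hc.continuousAt hU

lemma ParabolicC2.continuousAt_tderiv (hφ : ParabolicC2 φ x t) :
    ContinuousAt (fun p : Euc n × ℝ => tderiv φ p.1 p.2) (x, t) :=
  let ⟨_, hU, _, _, _, hct, _⟩ := hφ; hct.continuousAt hU

lemma ParabolicC2.continuousAt_sgrad (hφ : ParabolicC2 φ x t) :
    ContinuousAt (fun p : Euc n × ℝ => sgrad φ p.1 p.2) (x, t) :=
  let ⟨_, hU, _, _, _, _, hcx, _⟩ := hφ; hcx.continuousAt hU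

lemma ParabolicC2.continuousAt_sHess (hφ : ParabolicC2 φ x t) :
    ContinuousAt (fun p : Euc n × ℝ => sHess φ p.1 p.2) (x, t) :=
  let ⟨_, hU, _, _, _, _, _, hcxx⟩ := hφ; hcxx.continuousAt hU

lemma ParabolicC2.differentiableAt_sgrad (hφ : ParabolicC2 φ x t) :
    DifferentiableAt ℝ (fun y => sgrad φ y t) x :=
  (InnerProductSpace.toDual ℝ (Euc n)).symm.toContinuousLinearEquiv.differentiableAt.comp x
    ((hφ.contDiffAt_space.fderiv_right (m := 1) le_rfl).differentiableAt one_ne_zero)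

end ParabolicC2

section Penalized

variable {φ : Euc n → ℝ → ℝ} {x : Euc n} {t : ℝ}

def penalized (φ : Euc n → ℝ → ℝ) (x₀ : Euc n) (t₀ c M : ℝ) : Euc n → ℝ → ℝ :=
  fun x t => φ x t + ‖x - x₀‖ ^ 4 + (c * (t - t₀) ^ 2 + M)

variable (x₀ : Euc n) (t₀ c M : ℝ)

lemma tderiv_penalized (hφ : DifferentiableAt ℝ (φ x) t) :
    tderiv (penalized φ x₀ t₀ c M) x t = tderiv φ x t + 2 * c * (t - t₀) := by
  have htime : HasDerivAt (fun s => c * (s - t₀) ^ 2 + M) (2 * c * (t - t₀)) t := by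
    simpa [mul_comm, mul_left_comm] using
      ((((hasDerivAt_id t).sub_const t₀).pow 2).const_mul c).add_const M
  exact ((hφ.hasDerivAt.add_const _).add htime).deriv

lemma sgrad_penalized (hφ : DifferentiableAt ℝ (fun y => φ y t) x) :
    sgrad (penalized φ x₀ t₀ c M) x t = sgrad φ x t + gradient (fun y => ‖y - x₀‖ ^ 4) x := by
  have hq := (hasGradientAt_norm_sub_pow_four x₀ x).differentiableAt
  simp only [sgrad, penalized, gradient, fderiv_add_const, fderiv_fun_add hφ hq, map_add]

lemma sHess_penalized (hφ : ParabolicC2 φ x t) :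
    sHess (penalized φ x₀ t₀ c M) x t
      = sHess φ x t + fderiv ℝ (gradient fun y => ‖y - x₀‖ ^ 4) x := by
  have hnear : ∀ᶠ y in 𝓝 x, ParabolicC2 φ y t :=
    ((continuous_id.prodMk continuous_const).tendsto x).eventually hφ.eventually
  have heq : (fun y => sgrad (penalized φ x₀ t₀ c M) y t)
      =ᶠ[𝓝 x] fun y => sgrad φ y t + gradient (fun y => ‖y - x₀‖ ^ 4) y :=
    hnear.mono fun y hy =>
      sgrad_penalized x₀ t₀ c M (hy.contDiffAt_space.differentiableAt two_ne_zero)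
  have hq := (contDiff_gradient_norm_sub_pow_four x₀).differentiable one_ne_zero x
  rw [sHess, heq.fderiv_eq, fderiv_fun_add hφ.differentiableAt_sgrad hq, sHess]

lemma ParabolicC2.penalized (hφ : ParabolicC2 φ x t) :
    ParabolicC2 (penalized φ x₀ t₀ c M) x t := by
  obtain ⟨U, hU, hrest⟩ := hφ
  have hint : ∀ p ∈ interior U, ParabolicC2 φ p.1 p.2 :=
    fun p hp => ⟨U, mem_interior_iff_mem_nhds.mp hp, hrest⟩
  obtain ⟨_, _, hc, hct, hcx, hcxx⟩ := hrest
  refine ⟨interior U, interior_mem_nhds.mpr hU, fun p hp => ?_, fun p hp => ?_, ?_, ?_, ?_, ?_⟩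
  · exact ((hint p hp).differentiableAt_time.add_const _).add (by fun_prop)
  · exact ((hint p hp).contDiffAt_space.add (contDiff_norm_sub_pow_four x₀).contDiffAt).add
      contDiffAt_const
  · have hspace : Continuous fun p : Euc n × ℝ => ‖p.1 - x₀‖ ^ 4 := by fun_prop
    have htime : Continuous fun p : Euc n × ℝ => c * (p.2 - t₀) ^ 2 + M := by fun_prop
    exact ((hc.mono interior_subset).add hspace.continuousOn).add htime.continuousOn
  · have htime : Continuous fun p : Euc n × ℝ => 2 * c * (p.2 - t₀) := by fun_prop
    refine ((hct.mono interior_subset).add htime.continuousOn).congr fun p hp => ?_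
    exact tderiv_penalized x₀ t₀ c M (hint p hp).differentiableAt_time
  · refine ((hcx.mono interior_subset).add
      ((contDiff_gradient_norm_sub_pow_four x₀).continuous.comp_continuousOn
        continuous_fst.continuousOn)).congr fun p hp => ?_
    exact sgrad_penalized x₀ t₀ c M
      ((hint p hp).contDiffAt_space.differentiableAt two_ne_zero)
  · refine ((hcxx.mono interior_subset).add
      (((contDiff_gradient_norm_sub_pow_four x₀).continuous_fderiv one_ne_zero).comp_continuousOn
        continuous_fst.continuousOn)).congr fun p hp => ?_
    exact sHess_penalized x₀ t₀ c M (hint p hp)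

end Penalized

lemma tendsto_of_isMaxOn_penalty {E : Type*} [NormedAddCommGroup E] {K : Set (E × ℝ)}
    (hK : IsCompact K) {F : E × ℝ → ℝ} (hF : ContinuousOn F K) {x₀ : E} {t₀ : ℝ}
    (h₀ : (x₀, t₀) ∈ K) (hF₀ : F (x₀, t₀) = 0) (hpast : ∀ p ∈ K, p.2 ≤ t₀ → F p ≤ 0)
    {z : ℕ → E × ℝ} (hzK : ∀ j, z j ∈ K)
    (hmax : ∀ j : ℕ, IsMaxOn (fun p => F p - ‖p.1 - x₀‖ ^ 4 - (j + 1) * (p.2 - t₀) ^ 2) K (z j)) :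
    (∀ j, t₀ ≤ (z j).2) ∧ Tendsto z atTop (𝓝 (x₀, t₀)) := by
  have hval : ∀ j : ℕ, ‖(z j).1 - x₀‖ ^ 4 + (j + 1) * ((z j).2 - t₀) ^ 2 ≤ F (z j) := fun j => by
    have := hmax j h₀
    simp only [Set.mem_ofPred_eq, hF₀, sub_self, norm_zero] at this
    linarith
  have hfuture : ∀ j, t₀ ≤ (z j).2 := fun j => by
    by_contra! hlt
    have hpos : 0 < ((j : ℝ) + 1) * ((z j).2 - t₀) ^ 2 := by
      have : (z j).2 - t₀ ≠ 0 := by linarith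
      positivity
    linarith [hval j, hpast _ (hzK j) hlt.le, pow_nonneg (norm_nonneg ((z j).1 - x₀)) 4]
  obtain ⟨C, hC⟩ := (hK.image_of_continuousOn hF).bddAbove
  have htime : Tendsto (fun j => ((z j).2 - t₀) ^ 2) atTop (𝓝 0) := by
    have hbound : ∀ j : ℕ, ((z j).2 - t₀) ^ 2 ≤ C * (1 / ((j : ℝ) + 1)) := fun j => by
      rw [mul_one_div, le_div_iff₀ (by positivity)]
      linarith [hval j, hC ⟨z j, hzK j, rfl⟩, pow_nonneg (norm_nonneg ((z j).1 - x₀)) 4]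
    have hlim := tendsto_one_div_add_atTop_nhds_zero_nat.const_mul C
    rw [mul_zero] at hlim
    exact squeeze_zero (fun j => sq_nonneg _) hbound hlim
  refine ⟨hfuture, hK.tendsto_nhds_of_unique_mapClusterPt (.of_forall hzK) fun y hyK hy => ?_⟩
  have hy₂ : y.2 = t₀ := by
    have hcl := hy.continuousAt_comp (f := fun p : E × ℝ => (p.2 - t₀) ^ 2) (by fun_prop)
    have := eq_of_nhds_neBot (hcl.clusterPt.mono htime)
    simpa [sub_eq_zero] using this
  have hclosed : IsClosed (K ∩ (fun p : E × ℝ => F p - ‖p.1 - x₀‖ ^ 4) ⁻¹' Set.Ici 0) :=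
    (hF.sub (Continuous.continuousOn (by fun_prop))).preimage_isClosed_of_isClosed
      hK.isClosed isClosed_Ici
  have hy₁ : 0 ≤ F y - ‖y.1 - x₀‖ ^ 4 := (hclosed.mem_of_mapClusterPt hy (.of_forall fun j =>
    ⟨hzK j, by
      have : 0 ≤ ((j : ℝ) + 1) * ((z j).2 - t₀) ^ 2 := by positivity
      simp only [Set.mem_preimage, Set.mem_Ici]
      linarith [hval j]⟩)).2
  have hnorm : ‖y.1 - x₀‖ ^ 4 ≤ 0 := by linarith [hpast y hyK hy₂.le]
  have : y.1 = x₀ := by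
    simpa [sub_eq_zero] using le_antisymm hnorm (by positivity)
  exact Prod.ext this hy₂

section PastTouching

variable {h : ℝ} {Q : Set (Euc n × ℝ)} {u φ : Euc n → ℝ → ℝ} {x₀ : Euc n} {t₀ : ℝ}

lemma TAbovePast.eventually_le (hQ : IsOpen Q)
    (hu : ContinuousOn (fun p : Euc n × ℝ => u p.1 p.2) Q) (hz : (x₀, t₀) ∈ Q)
    (hφ : TAbovePast Q u φ x₀ t₀) :
    ∀ᶠ p in 𝓝 ((x₀, t₀) : Euc n × ℝ), p.2 ≤ t₀ → u p.1 p.2 ≤ φ p.1 p.2 := by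
  obtain ⟨W, hW, hWo, hzW⟩ := eventually_nhds_iff.mp
    ((hQ.eventually_mem hz).and (hφ.1.eventually.and hφ.2.2))
  filter_upwards [hWo.mem_nhds hzW] with p hpW hpt
  have hclosure : p ∈ closure (W ∩ {q | q.2 < t₀}) := by
    refine hWo.inter_closure ⟨hpW, map_mem_closure (f := fun τ => (p.1, τ)) (by fun_prop)
      (closure_Iio t₀ ▸ hpt : p.2 ∈ closure (Set.Iio t₀)) fun τ hτ => hτ⟩
  exact ContinuousWithinAt.closure_le (f := fun q : Euc n × ℝ => u q.1 q.2)
    (g := fun q : Euc n × ℝ => φ q.1 q.2) hclosure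
    (hu.continuousAt (hQ.mem_nhds (hW p hpW).1)).continuousWithinAt
    (hW p hpW).2.1.continuousAt.continuousWithinAt
    fun q ⟨hqW, hqt⟩ => (hW q hqW).2.2 (hW q hqW).1 hqt

lemma TAbovePast.exists_seq_tAbove_penalized (hQ : IsOpen Q)
    (hu : ContinuousOn (fun p : Euc n × ℝ => u p.1 p.2) Q) (hz : (x₀, t₀) ∈ Q)
    (hφ : TAbovePast Q u φ x₀ t₀) :
    ∃ (z : ℕ → Euc n × ℝ) (M : ℕ → ℝ), Tendsto z atTop (𝓝 (x₀, t₀)) ∧ (∀ j, t₀ ≤ (z j).2) ∧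
      ∀ᶠ j in atTop, z j ∈ Q ∧ TAbove Q u (penalized φ x₀ t₀ (j + 1) (M j)) (z j).1 (z j).2 := by
  obtain ⟨r, hr, hball⟩ := Metric.nhds_basis_closedBall.eventually_iff.mp
    ((hQ.eventually_mem hz).and (hφ.1.eventually.and (hφ.eventually_le hQ hu hz)))
  set K := Metric.closedBall ((x₀, t₀) : Euc n × ℝ) r
  set F : Euc n × ℝ → ℝ := fun p => u p.1 p.2 - φ p.1 p.2
  set G : ℕ → Euc n × ℝ → ℝ := fun j p => F p - ‖p.1 - x₀‖ ^ 4 - (j + 1) * (p.2 - t₀) ^ 2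
  have hK : IsCompact K := isCompact_closedBall _ _
  have h₀ : (x₀, t₀) ∈ K := Metric.mem_closedBall_self hr.le
  have hF : ContinuousOn F K := fun p hp =>
    ((hu.continuousAt (hQ.mem_nhds (hball hp).1)).sub
      (hball hp).2.1.continuousAt).continuousWithinAt
  have hmax : ∀ j : ℕ, ∃ z ∈ K, IsMaxOn (G j) K z := fun j =>
    have hpen : Continuous fun p : Euc n × ℝ => ‖p.1 - x₀‖ ^ 4 + (j + 1) * (p.2 - t₀) ^ 2 := by
      fun_prop
    hK.exists_isMaxOn ⟨_, h₀⟩ ((hF.sub hpen.continuousOn).congr fun p _ => by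
      simp only [G, Pi.sub_apply]; ring)
  choose z hzK hzmax using hmax
  obtain ⟨hfuture, hlim⟩ := tendsto_of_isMaxOn_penalty hK hF h₀ (by simp [F, hφ.2.1])
    (fun p hp hpt => sub_nonpos.mpr ((hball hp).2.2 hpt)) hzK hzmax
  refine ⟨z, fun j => G j (z j), hlim, hfuture, ?_⟩
  filter_upwards [hlim.eventually (Metric.isOpen_ball.mem_nhds (Metric.mem_ball_self hr))]
    with j hj
  have hjK := Metric.ball_subset_closedBall hj
  refine ⟨(hball hjK).1, (hball hjK).2.1.penalized _ _ _ _, by simp only [penalized, G, F]; ring,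
    ?_⟩
  filter_upwards [Metric.isOpen_ball.mem_nhds hj] with p hp _
  have := hzmax j (Metric.ball_subset_closedBall hp)
  simp only [Set.mem_ofPred_eq, G, F] at this
  simp only [penalized, G, F]
  linarith

lemma IsParaSub.isPastParaSub (hQ : IsOpen Q)
    (hu : ContinuousOn (fun p : Euc n × ℝ => u p.1 p.2) Q) (hsub : IsParaSub h Q u) :
    IsPastParaSub h Q u := by
  refine ⟨hsub.1, fun x₀ t₀ hz φ hφ => ?_⟩
  obtain ⟨z, M, hlim, hfuture, htouch⟩ := hφ.exists_seq_tAbove_penalized hQ hu hz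
  have hz₁ : Tendsto (fun j => (z j).1) atTop (𝓝 x₀) := (continuous_fst.tendsto _).comp hlim
  have hgrad : Tendsto (fun j => sgrad φ (z j).1 (z j).2 +
      gradient (fun y => ‖y - x₀‖ ^ 4) (z j).1) atTop (𝓝 (sgrad φ x₀ t₀)) := by
    simpa [gradient_norm_sub_pow_four] using (hφ.1.continuousAt_sgrad.tendsto.comp hlim).add
      (((contDiff_gradient_norm_sub_pow_four x₀).continuous.tendsto x₀).comp hz₁)
  have hHess : Tendsto (fun j => sHess φ (z j).1 (z j).2 +
      fderiv ℝ (gradient fun y => ‖y - x₀‖ ^ 4) (z j).1) atTop (𝓝 (sHess φ x₀ t₀)) := by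
    simpa [fderiv_gradient_norm_sub_pow_four_self] using
      (hφ.1.continuousAt_sHess.tendsto.comp hlim).add
        ((((contDiff_gradient_norm_sub_pow_four x₀).continuous_fderiv one_ne_zero).tendsto x₀).comp
          hz₁)
  refine SubJetCond.of_tendsto (hφ.1.continuousAt_tderiv.tendsto.comp hlim) hgrad hHess ?_
  filter_upwards [htouch, hlim.eventually hφ.1.eventually] with j ⟨hjQ, hjT⟩ hjC2
  have hjsub := (subCond_iff_subJetCond _ _ _).mp (hsub.2 _ _ hjQ _ hjT)
  rw [tderiv_penalized _ _ _ _ hjC2.differentiableAt_time,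
    sgrad_penalized _ _ _ _ (hjC2.contDiffAt_space.differentiableAt two_ne_zero),
    sHess_penalized _ _ _ _ hjC2] at hjsub
  have := hfuture j
  exact hjsub.mono (le_add_of_nonneg_right (by positivity))

end PastTouching

theorem statement4_general
    (n : ℕ) (h : ℝ) (Ω : Set (Euc n)) (hΩo : IsOpen Ω)
    (T : ℝ)
    (u : Euc n → ℝ → ℝ)
    (hu : ContinuousOn (fun p : Euc n × ℝ => u p.1 p.2) (closure Ω ×ˢ Set.Ico 0 T)) :
    (IsPastParaSub h (Ω ×ˢ Set.Ioo 0 T) u ∧ IsPastParaSuper h (Ω ×ˢ Set.Ioo 0 T) u)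
    ↔ (IsParaSub h (Ω ×ˢ Set.Ioo 0 T) u ∧ IsParaSuper h (Ω ×ˢ Set.Ioo 0 T) u) := by
  have hQ : IsOpen (Ω ×ˢ Set.Ioo 0 T) := hΩo.prod isOpen_Ioo
  have hu' := hu.mono (Set.prod_mono subset_closure Set.Ioo_subset_Ico_self)
  constructor
  · rintro ⟨hsub, hsuper⟩
    exact ⟨hsub.isParaSub, hsuper.isParaSuper⟩
  · rintro ⟨hsub, hsuper⟩
    exact ⟨hsub.isPastParaSub hQ hu',
      .of_neg hsuper.1 (hsuper.neg.isPastParaSub hQ hu'.fun_neg)⟩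

/-- a continuous function on Ω̄ × [0,T) is a past parabolic viscosity
h-infinite solution of u_t − Δ^h_∞u = 0 in Ω_T iff it is a parabolic viscosity
h-infinite solution in Ω_T. -/
theorem statement4
    (n : ℕ) (h : ℝ) (hh : 1 ≤ h) (Ω : Set (Euc n)) (hΩo : IsOpen Ω)
    (hΩb : Bornology.IsBounded Ω) (T : ℝ) (hT : 0 < T)
    (u : Euc n → ℝ → ℝ)
    (hu : ContinuousOn (fun p : Euc n × ℝ => u p.1 p.2) (closure Ω ×ˢ Set.Ico 0 T)) :
    (IsPastParaSub h (Ω ×ˢ Set.Ioo 0 T) u ∧ IsPastParaSuper h (Ω ×ˢ Set.Ioo 0 T) u)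
    ↔ (IsParaSub h (Ω ×ˢ Set.Ioo 0 T) u ∧ IsParaSuper h (Ω ×ˢ Set.Ioo 0 T) u) :=
  statement4_general n h Ω hΩo T u hu
end
end

section
/- Let h ≥ 1, let Ω ⊂ ℝⁿ be a bounded open set and T > 0, and let g be continuous on Ω̄ × [0,T). If u is continuous on Ω̄ × [0,T), is a parabolic viscosity h-infinite solution of u_t − Δ^h_∞u = 0 in Ω_T, and satisfies u = g on ∂_par Ω_T, then sup_{(x,t) ∈ Ω_T} |u(x,t)| ≤ sup_{(x,t) ∈ ∂_par Ω_T} |g(x,t)|. -/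
/-!
Penalization. For `ε > 0` and `τ < T`, the function `u - ε / (τ - t)` tends to `-∞` as `t → τ`,
so it attains its maximum over `closure Ω × [0, τ)`. At an interior maximum the spatially
constant function `c + ε / (τ - t)` touches `u` from above; its gradient and Hessian vanish, so
for `h = 1` as well as for `h > 1` the subsolution condition forces its time derivative
`ε / (τ - t)²` to be `≤ 0`, which is absurd. Hence the maximum lies on the parabolic boundary,
and `ε → 0` gives `u ≤ sup |g|`. The same argument applies to `-u`, which satisfies the
subsolution condition for test functions of time alone.
-/

open scoped RealInnerProductSpace
open Filter Topology Asymptotics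

noncomputable section

variable {n : ℕ}

open Set

lemma sgrad_const_space (ψ : ℝ → ℝ) (x : Euc n) (t : ℝ) :
    sgrad (fun (_ : Euc n) s => ψ s) x t = 0 :=
  gradient_const x (ψ t)

lemma sHess_const_space (ψ : ℝ → ℝ) (x : Euc n) (t : ℝ) :
    sHess (fun (_ : Euc n) s => ψ s) x t = 0 := by
  simp only [sHess, sgrad_const_space, fderiv_const_apply]

lemma parabolicC2_const_space {ψ : ℝ → ℝ} {V : Set ℝ} (hV : IsOpen V) (hψ : ContDiffOn ℝ 1 ψ V)
    (x₀ : Euc n) {t₀ : ℝ} (ht₀ : t₀ ∈ V) : ParabolicC2 (fun (_ : Euc n) s => ψ s) x₀ t₀ := by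
  have hsnd : MapsTo Prod.snd (Prod.snd ⁻¹' V : Set (Euc n × ℝ)) V := fun _ hp => hp
  refine ⟨Prod.snd ⁻¹' V, (hV.preimage continuous_snd).mem_nhds ht₀, fun p hp => ?_,
    fun _ _ => contDiffAt_const, hψ.continuousOn.comp continuous_snd.continuousOn hsnd,
    (hψ.continuousOn_deriv_of_isOpen hV le_rfl).comp continuous_snd.continuousOn hsnd, ?_, ?_⟩
  · exact (hψ.differentiableOn one_ne_zero p.2 hp).differentiableAt (hV.mem_nhds hp)
  · simp only [sgrad_const_space]; exact continuousOn_const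
  · simp only [sHess_const_space]; exact continuousOn_const

lemma SubCond.deriv_nonpos {h : ℝ} (hh : 1 ≤ h) {ψ : ℝ → ℝ} {x₀ : Euc n} {t₀ : ℝ}
    (hφ : SubCond h (fun (_ : Euc n) s => ψ s) x₀ t₀) : deriv ψ t₀ ≤ 0 := by
  have hgrad := sgrad_const_space ψ x₀ t₀
  rcases hh.eq_or_lt with rfl | hh
  · have hmax : qMax (0 : Euc n →L[ℝ] Euc n) ≤ 0 :=
      Real.sSup_nonpos (by rintro _ ⟨η, -, rfl⟩; simp)
    have := hφ.2.1 hgrad rfl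
    rw [sHess_const_space] at this
    exact (sub_nonpos.mp this).trans hmax
  · exact hφ.2.2 hgrad hh

lemma SuperCond.deriv_nonneg {h : ℝ} (hh : 1 ≤ h) {ψ : ℝ → ℝ} {x₀ : Euc n} {t₀ : ℝ}
    (hφ : SuperCond h (fun (_ : Euc n) s => ψ s) x₀ t₀) : 0 ≤ deriv ψ t₀ := by
  have hgrad := sgrad_const_space ψ x₀ t₀
  rcases hh.eq_or_lt with rfl | hh
  · have hmin : 0 ≤ qMin (0 : Euc n →L[ℝ] Euc n) :=
      Real.sInf_nonneg (by rintro _ ⟨η, -, rfl⟩; simp)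
    have := hφ.2.1 hgrad rfl
    rw [sHess_const_space] at this
    exact hmin.trans (sub_nonneg.mp this)
  · exact hφ.2.2 hgrad hh

/-- `w` is a viscosity subsolution of `w_t = 0` on `Q`, tested only against functions of time.
Both a subsolution and minus a supersolution of `u_t - Δ^h_∞ u = 0` are such. -/
def IsTimeSub {X : Type*} [TopologicalSpace X] (Q : Set (X × ℝ)) (w : X → ℝ → ℝ) : Prop :=
  ∀ x₀ t₀, (x₀, t₀) ∈ Q → ∀ (ψ : ℝ → ℝ) (V : Set ℝ), IsOpen V → t₀ ∈ V → ContDiffOn ℝ 1 ψ V →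
    w x₀ t₀ = ψ t₀ → (∀ᶠ p in 𝓝 (x₀, t₀), p ∈ Q → w p.1 p.2 ≤ ψ p.2) → deriv ψ t₀ ≤ 0

lemma IsParaSub.isTimeSub {h : ℝ} (hh : 1 ≤ h) {Q : Set (Euc n × ℝ)} {u : Euc n → ℝ → ℝ}
    (hu : IsParaSub h Q u) : IsTimeSub Q u :=
  fun x₀ t₀ hp _ _ hV ht₀ hψ heq hle =>
    (hu.2 x₀ t₀ hp _ ⟨parabolicC2_const_space hV hψ x₀ ht₀, heq, hle⟩).deriv_nonpos hh

lemma IsParaSuper.isTimeSub_neg {h : ℝ} (hh : 1 ≤ h) {Q : Set (Euc n × ℝ)} {u : Euc n → ℝ → ℝ}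
    (hu : IsParaSuper h Q u) : IsTimeSub Q (fun x t => -u x t) := by
  intro x₀ t₀ hp ψ V hV ht₀ hψ heq hle
  have hTB : TBelow Q u (fun _ s => -ψ s) x₀ t₀ :=
    ⟨parabolicC2_const_space hV hψ.neg x₀ ht₀, neg_eq_iff_eq_neg.mp heq,
      hle.mono fun p hp hpQ => neg_le.mp (hp hpQ)⟩
  have := (hu.2 x₀ t₀ hp _ hTB).deriv_nonneg hh
  rwa [deriv.fun_neg, neg_nonneg] at this

lemma hasDerivAt_add_mul_inv_sub (c ε τ : ℝ) {t : ℝ} (ht : t ≠ τ) :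
    HasDerivAt (fun s => c + ε * (τ - s)⁻¹) (ε * ((τ - t) ^ 2)⁻¹) t := by
  have := (((hasDerivAt_id' t).const_sub τ).inv (sub_ne_zero.mpr ht.symm)).const_mul ε
  exact (this.const_add c).congr_deriv (by simp [div_eq_mul_inv])

lemma contDiffOn_add_mul_inv_sub (c ε τ : ℝ) :
    ContDiffOn ℝ 1 (fun s => c + ε * (τ - s)⁻¹) (Iio τ) :=
  contDiffOn_const.add (contDiffOn_const.mul ((contDiffOn_const.sub contDiffOn_id).inv
    fun _ hs => (sub_pos.mpr hs).ne'))

lemma exists_isMaxOn_sub_mul_inv {X : Type*} [TopologicalSpace X] {K : Set X} (hK : IsCompact K)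
    {τ ε : ℝ} (hε : 0 < ε) {f : X × ℝ → ℝ} (hf : ContinuousOn f (K ×ˢ Icc 0 τ))
    {p₁ : X × ℝ} (hp₁ : p₁ ∈ K ×ˢ Ico 0 τ) :
    ∃ p₀ ∈ K ×ˢ Ico 0 τ, IsMaxOn (fun p => f p - ε * (τ - p.2)⁻¹) (K ×ˢ Ico 0 τ) p₀ := by
  set v := fun p : X × ℝ => f p - ε * (τ - p.2)⁻¹
  obtain ⟨hp₁K, hp₁0, hp₁τ⟩ := hp₁
  obtain ⟨B, hB⟩ := (hK.prod isCompact_Icc).bddAbove_image hf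
  have hfB : ∀ p ∈ K ×ˢ Ico 0 τ, f p ≤ B :=
    fun p hp => hB ⟨p, ⟨hp.1, hp.2.1, hp.2.2.le⟩, rfl⟩
  have hA : 0 < B - v p₁ := by
    have := hfB p₁ ⟨hp₁K, hp₁0, hp₁τ⟩
    have : 0 < ε * (τ - p₁.2)⁻¹ := mul_pos hε (inv_pos.mpr (sub_pos.mpr hp₁τ))
    linarith
  set σ := max p₁.2 (τ - ε / (B - v p₁))
  have hστ : σ < τ := max_lt hp₁τ (sub_lt_self τ (div_pos hε hA))
  have hlate : ∀ p ∈ K ×ˢ Ico 0 τ, σ < p.2 → v p < v p₁ := by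
    intro p hp hσp
    have hpos : 0 < τ - p.2 := sub_pos.mpr hp.2.2
    have hclose : τ - p.2 < ε / (B - v p₁) := by
      linarith [le_max_right p₁.2 (τ - ε / (B - v p₁))]
    have : B - v p₁ < ε * (τ - p.2)⁻¹ := by
      rw [← div_eq_mul_inv, lt_div_iff₀ hpos]
      rwa [lt_div_iff₀' hA] at hclose
    linarith [hfB p hp]
  have hvc : ContinuousOn v (K ×ˢ Icc 0 σ) :=
    (hf.mono (prod_mono_right (Icc_subset_Icc_right hστ.le))).sub
      (continuousOn_const.mul ((continuous_const.sub continuous_snd).continuousOn.inv₀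
        fun p hp => (sub_pos.mpr (hp.2.2.trans_lt hστ)).ne'))
  obtain ⟨p₀, hp₀, hmax⟩ :=
    (hK.prod isCompact_Icc).exists_isMaxOn ⟨p₁, hp₁K, hp₁0, le_max_left _ _⟩ hvc
  refine ⟨p₀, ⟨hp₀.1, hp₀.2.1, hp₀.2.2.trans_lt hστ⟩, fun p hp => ?_⟩
  by_cases hpσ : p.2 ≤ σ
  · exact hmax ⟨hp.1, hp.2.1, hpσ⟩
  · exact ((hlate p hp (not_le.mp hpσ)).trans_le (hmax ⟨hp₁K, hp₁0, le_max_left _ _⟩)).le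

section TimeSub

variable {X : Type*} [TopologicalSpace X] {Ω : Set X} {τ T : ℝ} {w : X → ℝ → ℝ} {M : ℝ}

lemma IsTimeSub.le_add_mul_inv (hΩc : IsCompact (closure Ω)) (hτT : τ ≤ T)
    (hwc : ContinuousOn (fun p : X × ℝ => w p.1 p.2) (closure Ω ×ˢ Icc 0 τ))
    (hw : IsTimeSub (Ω ×ˢ Ioo 0 T) w)
    (hM : ∀ x ∈ closure Ω, ∀ t ∈ Ico 0 τ, (x ∉ Ω ∨ t = 0) → w x t ≤ M)
    {x : X} (hx : x ∈ closure Ω) {t : ℝ} (ht : t ∈ Ico 0 τ) {ε : ℝ} (hε : 0 < ε) :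
    w x t ≤ M + ε * (τ - t)⁻¹ := by
  obtain ⟨p₀, ⟨hp₀Ω, hp₀0, hp₀τ⟩, hmax⟩ := exists_isMaxOn_sub_mul_inv hΩc hε hwc
    (show (x, t) ∈ closure Ω ×ˢ Ico 0 τ from ⟨hx, ht⟩)
  set c := w p₀.1 p₀.2 - ε * (τ - p₀.2)⁻¹
  have hpen : 0 < ε * (τ - p₀.2)⁻¹ := mul_pos hε (inv_pos.mpr (sub_pos.mpr hp₀τ))
  have hc : c ≤ M := by
    by_cases hint : p₀.1 ∈ Ω ∧ 0 < p₀.2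
    · exfalso
      have hle : ∀ᶠ p in 𝓝 p₀, p ∈ Ω ×ˢ Ioo 0 T → w p.1 p.2 ≤ c + ε * (τ - p.2)⁻¹ := by
        filter_upwards [(isOpen_Iio.preimage continuous_snd).mem_nhds hp₀τ] with p hpτ hpQ
        have := isMaxOn_iff.mp hmax p ⟨subset_closure hpQ.1, hpQ.2.1.le, hpτ⟩
        linarith
      have hderiv := hw p₀.1 p₀.2 ⟨hint.1, hint.2, hp₀τ.trans_le hτT⟩ _ _ isOpen_Iio hp₀τ
        (contDiffOn_add_mul_inv_sub c ε τ) (by ring) hle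
      rw [(hasDerivAt_add_mul_inv_sub c ε τ hp₀τ.ne).deriv] at hderiv
      have : 0 < ε * ((τ - p₀.2) ^ 2)⁻¹ := by positivity
      linarith
    · have := hM p₀.1 hp₀Ω p₀.2 ⟨hp₀0, hp₀τ⟩ (by
        rw [not_and_or, not_lt] at hint
        exact hint.imp_right hp₀0.antisymm')
      linarith
  have := isMaxOn_iff.mp hmax (x, t) ⟨hx, ht⟩
  linarith

lemma IsTimeSub.le_of_parabolicBoundary (hΩc : IsCompact (closure Ω)) (hτT : τ ≤ T)
    (hwc : ContinuousOn (fun p : X × ℝ => w p.1 p.2) (closure Ω ×ˢ Icc 0 τ))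
    (hw : IsTimeSub (Ω ×ˢ Ioo 0 T) w)
    (hM : ∀ x ∈ closure Ω, ∀ t ∈ Ico 0 τ, (x ∉ Ω ∨ t = 0) → w x t ≤ M)
    {x : X} (hx : x ∈ closure Ω) {t : ℝ} (ht : t ∈ Ico 0 τ) : w x t ≤ M := by
  have hgap : 0 < τ - t := sub_pos.mpr ht.2
  refine le_of_forall_pos_le_add fun δ hδ => ?_
  have := hw.le_add_mul_inv hΩc hτT hwc hM hx ht (mul_pos hδ hgap)
  rwa [mul_assoc, mul_inv_cancel₀ hgap.ne', mul_one] at this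

end TimeSub

lemma mem_parabolicBoundary {X : Type*} [TopologicalSpace X] {Ω : Set X} (hΩ : IsOpen Ω)
    {τ T : ℝ} (hτT : τ ≤ T) {x : X} (hx : x ∈ closure Ω) {t : ℝ} (ht : t ∈ Ico 0 τ)
    (hxt : x ∉ Ω ∨ t = 0) : (x, t) ∈ closure Ω ×ˢ ({0} : Set ℝ) ∪ frontier Ω ×ˢ Ioo 0 T := by
  rcases ht.1.eq_or_lt with h0 | hpos
  · exact Or.inl ⟨hx, h0.symm⟩
  · refine Or.inr ⟨⟨hx, ?_⟩, hpos, ht.2.trans_le hτT⟩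
    rw [hΩ.interior_eq]
    exact hxt.resolve_right hpos.ne'

lemma EReal.coe_le_biSup_of_forall_le {ι : Type*} {s : Set ι} {f : ι → ℝ} {a : ℝ}
    (h : ∀ M : ℝ, (∀ i ∈ s, f i ≤ M) → a ≤ M) : (a : EReal) ≤ ⨆ i ∈ s, (f i : EReal) := by
  have hle : ∀ i ∈ s, (f i : EReal) ≤ ⨆ i ∈ s, (f i : EReal) :=
    fun i hi => le_iSup₂ (f := fun i _ => (f i : EReal)) i hi
  generalize ⨆ i ∈ s, (f i : EReal) = S at hle
  induction S using EReal.rec with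
  | bot =>
    have := h (a - 1) fun i hi => absurd (hle i hi) (EReal.coe_ne_bot _ ∘ le_bot_iff.mp)
    linarith
  | coe M => exact EReal.coe_le_coe_iff.mpr (h M fun i hi => EReal.coe_le_coe_iff.mp (hle i hi))
  | top => exact le_top

theorem statement7_general
    (n : ℕ) (h : ℝ) (hh : 1 ≤ h) (Ω : Set (Euc n)) (hΩo : IsOpen Ω)
    (hΩb : Bornology.IsBounded Ω) (T : ℝ)
    (g u : Euc n → ℝ → ℝ)
    (huc : ContinuousOn (fun p : Euc n × ℝ => u p.1 p.2) (closure Ω ×ˢ Set.Ico 0 T))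
    (hsol : IsParaSub h (Ω ×ˢ Set.Ioo 0 T) u ∧ IsParaSuper h (Ω ×ˢ Set.Ioo 0 T) u)
    (hb : ∀ p : Euc n × ℝ,
      p ∈ (closure Ω ×ˢ ({0} : Set ℝ)) ∪ (frontier Ω ×ˢ Set.Ioo 0 T) →
      u p.1 p.2 = g p.1 p.2) :
    (⨆ p ∈ Ω ×ˢ Set.Ioo 0 T, ((|u p.1 p.2| : ℝ) : EReal)) ≤
      ⨆ p ∈ (closure Ω ×ˢ ({0} : Set ℝ)) ∪ (frontier Ω ×ˢ Set.Ioo 0 T),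
        ((|g p.1 p.2| : ℝ) : EReal) := by
  refine iSup₂_le fun ⟨x, t⟩ ⟨hx, (ht : t ∈ Ioo 0 T)⟩ =>
    EReal.coe_le_biSup_of_forall_le fun M hM => ?_
  -- `u` is only continuous on `closure Ω × [0, T)`, so work up to an intermediate time `τ < T`
  obtain ⟨τ, htτ, hτT⟩ := exists_between ht.2
  have hΩc : IsCompact (closure Ω) := hΩb.isCompact_closure
  have huτ : ContinuousOn (fun p : Euc n × ℝ => u p.1 p.2) (closure Ω ×ˢ Icc 0 τ) :=
    huc.mono (prod_mono_right (Icc_subset_Ico_right hτT))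
  have hbd : ∀ y ∈ closure Ω, ∀ s ∈ Ico 0 τ, (y ∉ Ω ∨ s = 0) → |u y s| ≤ M := by
    intro y hy s hs hys
    have hpar := mem_parabolicBoundary hΩo hτT.le hy hs hys
    rw [hb _ hpar]
    exact hM _ hpar
  have hx' : x ∈ closure Ω := subset_closure hx
  have ht' : t ∈ Ico 0 τ := ⟨ht.1.le, htτ⟩
  refine abs_le.mpr ⟨neg_le.mp ?_, ?_⟩
  · exact (hsol.2.isTimeSub_neg hh).le_of_parabolicBoundary hΩc hτT.le huτ.neg
      (fun y hy s hs hys => (neg_le_abs _).trans (hbd y hy s hs hys)) hx' ht'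
  · exact (hsol.1.isTimeSub hh).le_of_parabolicBoundary hΩc hτT.le huτ
      (fun y hy s hs hys => (le_abs_self _).trans (hbd y hy s hs hys)) hx' ht'

/-- sup_{Ω_T} |u| ≤ sup_{∂_par Ω_T} |g| for every parabolic viscosity
h-infinite solution with boundary data g. -/
theorem statement7
    (n : ℕ) (h : ℝ) (hh : 1 ≤ h) (Ω : Set (Euc n)) (hΩo : IsOpen Ω)
    (hΩb : Bornology.IsBounded Ω) (T : ℝ) (hT : 0 < T)
    (g u : Euc n → ℝ → ℝ)
    (hg : ContinuousOn (fun p : Euc n × ℝ => g p.1 p.2) (closure Ω ×ˢ Set.Ico 0 T))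
    (huc : ContinuousOn (fun p : Euc n × ℝ => u p.1 p.2) (closure Ω ×ˢ Set.Ico 0 T))
    (hsol : IsParaSub h (Ω ×ˢ Set.Ioo 0 T) u ∧ IsParaSuper h (Ω ×ˢ Set.Ioo 0 T) u)
    (hb : ∀ p : Euc n × ℝ,
      p ∈ (closure Ω ×ˢ ({0} : Set ℝ)) ∪ (frontier Ω ×ˢ Set.Ioo 0 T) →
      u p.1 p.2 = g p.1 p.2) :
    (⨆ p ∈ Ω ×ˢ Set.Ioo 0 T, ((|u p.1 p.2| : ℝ) : EReal)) ≤
      ⨆ p ∈ (closure Ω ×ˢ ({0} : Set ℝ)) ∪ (frontier Ω ×ˢ Set.Ioo 0 T),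
        ((|g p.1 p.2| : ℝ) : EReal) :=
  statement7_general n h hh Ω hΩo hΩb T g u huc hsol hb
end
end
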